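/- Let p ∈ (1,2) and set κ := (p-1)^{-p}. For a > 0 let ψ(·,a) be the function associated with the unique solution f(·,a) of (|f'|^{p-2} f')' + f - |f'|^{p-1} = 0, f(0) = a, f'(0) = 0, via ψ(1-f(r,a)/a, a) = |f'(r,a)|^p/a^p, and let ℓ(a) := lim_{y→1} ψ(y,a). Then ℓ(a) > 0 if and only if sup_{y ∈ [0,1)} { ψ(y,a)(1-y)^{-p} } > κ. -/

import Mathlib

open Set Filter Topology

/-- The extinction "radius" `R = inf{r > 0 : f(r) = 0}`, as an extended real number
(`⊤` when `f` does not vanish on `(0,∞)`). -/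
noncomputable def extTime (f : ℝ → ℝ) : EReal :=
  sInf {x : EReal | ∃ r : ℝ, 0 < r ∧ f r = 0 ∧ x = (r : EReal)}

/-- `f` solves `(|f'|^{p-2} f')' + f - |f'|^{p-1} = 0` on `(0,∞)` with `f(0)=a`, `f'(0)=0`;
`fd` is the derivative of `f` and `gd` the derivative of `|f'|^{p-2} f'`, both continuous
on `[0,∞)`, so that `f ∈ C¹([0,∞))` and `|f'|^{p-2} f' ∈ C¹([0,∞))`. -/
def IsSol (p a : ℝ) (f fd gd : ℝ → ℝ) : Prop :=
  (∀ r ∈ Set.Ici (0:ℝ), HasDerivWithinAt f (fd r) (Set.Ici 0) r) ∧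
  ContinuousOn fd (Set.Ici 0) ∧
  (∀ r ∈ Set.Ici (0:ℝ), HasDerivWithinAt (fun s => |fd s| ^ (p-2) * fd s) (gd r) (Set.Ici 0) r) ∧
  ContinuousOn gd (Set.Ici 0) ∧
  (∀ r ∈ Set.Ioi (0:ℝ), gd r + f r - |fd r| ^ (p-1) = 0) ∧
  f 0 = a ∧ fd 0 = 0

/-- `ψ` is the function associated with `f = f(·,a)` via `ψ(1 - f(r)/a) = |f'(r)|^p/a^p`
for `r ∈ [0,R(a))`. -/
def PsiRel (p a : ℝ) (f fd ψ : ℝ → ℝ) : Prop :=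
  ∀ r : ℝ, 0 ≤ r → (r : EReal) < extTime f → ψ (1 - f r / a) = |fd r| ^ p / a ^ p

/-! The hypothesis on `y₀` says that `G = |f'| - f/(p-1)` is positive at the radius `r₀` with
`f(r₀) = a(1-y₀)`. Before extinction `G` is nondecreasing, so `|f'| ≥ G(r₀)` beyond `r₀`, that is
`ψ ≥ (G(r₀)/a)^p` on `(y₀, 1)`, and hence `ℓ > 0`. Every `y ∈ [0,1)` is reached before extinction
because a solution that stays positive cannot stay above any `ε > 0`. Conversely, if `ℓ > 0` then
`ψ(y)(1-y)^{-p} → ∞` as `y → 1`. -/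

/-- `φ_p(x) = |x|^{p-2} x`, in terms of which the equation reads `φ_p(f')' = |φ_p(f')| - f`. -/
noncomputable def pFlux (p x : ℝ) : ℝ := |x| ^ (p - 2) * x

lemma abs_pFlux {p : ℝ} (hp : p ≠ 1) (x : ℝ) : |pFlux p x| = |x| ^ (p - 1) := by
  rcases eq_or_ne x 0 with rfl | hx
  · simp [pFlux, Real.zero_rpow (sub_ne_zero.2 hp)]
  · rw [pFlux, abs_mul, abs_of_nonneg (Real.rpow_nonneg (abs_nonneg x) _),
      ← Real.rpow_add_one (abs_pos.2 hx).ne']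
    ring_nf

lemma abs_eq_abs_pFlux_rpow {p : ℝ} (hp : p ≠ 1) (x : ℝ) : |x| = |pFlux p x| ^ (p - 1)⁻¹ := by
  rw [abs_pFlux hp, Real.rpow_rpow_inv (abs_nonneg x) (sub_ne_zero.2 hp)]

lemma pFlux_nonpos_iff {p x : ℝ} : pFlux p x ≤ 0 ↔ x ≤ 0 := by
  refine ⟨fun h => ?_, mul_nonpos_of_nonneg_of_nonpos (Real.rpow_nonneg (abs_nonneg x) _)⟩
  by_contra! hx
  exact h.not_gt (mul_pos (Real.rpow_pos_of_pos (abs_pos.2 hx.ne') _) hx)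

section extTime

variable {f : ℝ → ℝ}

lemma extTime_le {r : ℝ} (hr : 0 < r) (hfr : f r = 0) : extTime f ≤ r :=
  sInf_le ⟨r, hr, hfr, rfl⟩

lemma extTime_eq_top_or (hf : ContinuousOn f (Ici 0)) (h0 : f 0 ≠ 0) :
    extTime f = ⊤ ∨ ∃ R > 0, f R = 0 ∧ extTime f = R := by
  by_cases hZ : ∃ r > 0, f r = 0
  · right
    obtain ⟨r, hr, hfr⟩ := hZ
    set Z := Ici 0 ∩ f ⁻¹' {0}
    have hZbdd : BddBelow Z := ⟨0, fun z hz => hz.1⟩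
    have hR : sInf Z ∈ Z :=
      (hf.preimage_isClosed_of_isClosed isClosed_Ici isClosed_singleton).csInf_mem
        ⟨r, hr.le, hfr⟩ hZbdd
    have hRpos : 0 < sInf Z := lt_of_le_of_ne hR.1 fun h => h0 (h ▸ hR.2)
    refine ⟨sInf Z, hRpos, hR.2, le_antisymm (extTime_le hRpos hR.2) (le_sInf ?_)⟩
    rintro _ ⟨z, hz, hfz, rfl⟩
    exact EReal.coe_le_coe_iff.2 (csInf_le hZbdd ⟨hz.le, hfz⟩)
  · left
    push Not at hZ
    rw [extTime, sInf_eq_top]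
    rintro _ ⟨r, hr, hfr, rfl⟩
    exact absurd hfr (hZ r hr)

lemma zero_lt_extTime (hf : ContinuousOn f (Ici 0)) (h0 : f 0 ≠ 0) : 0 < extTime f := by
  rcases extTime_eq_top_or hf h0 with h | ⟨R, hR, -, h⟩
  · simp [h]
  · simpa [h] using hR

lemma pos_of_lt_extTime (hf : ContinuousOn f (Ici 0)) (h0 : 0 < f 0) {s : ℝ} (hs : 0 ≤ s)
    (hsR : (s : EReal) < extTime f) : 0 < f s := by
  by_contra! hfs
  obtain ⟨t, ht, hft⟩ := intermediate_value_Icc' hs (hf.mono Icc_subset_Ici_self)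
    (show (0 : ℝ) ∈ Icc (f s) (f 0) from ⟨hfs, h0.le⟩)
  have ht0 : 0 < t := lt_of_le_of_ne ht.1 (by rintro rfl; linarith)
  exact hsR.not_ge ((extTime_le ht0 hft).trans (EReal.coe_le_coe_iff.2 ht.2))

end extTime

lemma PsiRel.eq_rpow {p a : ℝ} {f fd ψ : ℝ → ℝ} (hrel : PsiRel p a f fd ψ) (ha : 0 < a)
    {r y : ℝ} (hr : 0 ≤ r) (hrR : (r : EReal) < extTime f) (hfr : f r = a * (1 - y)) :
    ψ y = (|fd r| / a) ^ p := by
  have := hrel r hr hrR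
  rwa [hfr, mul_div_cancel_left₀ _ ha.ne', sub_sub_cancel,
    ← Real.div_rpow (abs_nonneg _) ha.le] at this

lemma exists_nonpos_of_hasDerivAt_le {f f' : ℝ → ℝ} {T c : ℝ} (hc : 0 < c)
    (hf : ContinuousOn f (Ici T)) (hderiv : ∀ x > T, HasDerivAt f (f' x) x)
    (hle : ∀ x > T, f' x ≤ -c) : ∃ t ≥ T, f t ≤ 0 := by
  have hT : T ≤ T + |f T| / c := le_add_of_nonneg_right (by positivity)
  have hlin := (convex_Ici T).image_sub_le_mul_sub_of_deriv_le hf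
    (fun x hx => (hderiv x (interior_Ici.subset hx)).differentiableAt.differentiableWithinAt)
    (fun x hx => (hderiv x (interior_Ici.subset hx)).deriv ▸ hle x (interior_Ici.subset hx))
    T (le_refl T) (T + |f T| / c) hT hT
  have hcT : -c * (T + |f T| / c - T) = -|f T| := by field_simp; ring
  exact ⟨T + |f T| / c, hT, by linarith [le_abs_self (f T)]⟩

namespace IsSol

variable {p a : ℝ} {f fd gd : ℝ → ℝ}

lemma apply_zero (hf : IsSol p a f fd gd) : f 0 = a :=
  hf.2.2.2.2.2.1

lemma continuousOn (hf : IsSol p a f fd gd) : ContinuousOn f (Ici 0) :=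
  fun r hr => (hf.1 r hr).continuousWithinAt

lemma hasDerivAt (hf : IsSol p a f fd gd) {r : ℝ} (hr : 0 < r) : HasDerivAt f (fd r) r :=
  (hf.1 r hr.le).hasDerivAt (Ici_mem_nhds hr)

lemma hasDerivWithinAt_pFlux (hf : IsSol p a f fd gd) {r : ℝ} (hr : 0 ≤ r) :
    HasDerivWithinAt (fun s => pFlux p (fd s)) (gd r) (Ici 0) r :=
  hf.2.2.1 r hr

lemma hasDerivAt_pFlux (hf : IsSol p a f fd gd) {r : ℝ} (hr : 0 < r) :
    HasDerivAt (fun s => pFlux p (fd s)) (gd r) r :=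
  (hf.hasDerivWithinAt_pFlux hr.le).hasDerivAt (Ici_mem_nhds hr)

lemma continuousOn_pFlux (hf : IsSol p a f fd gd) :
    ContinuousOn (fun s => pFlux p (fd s)) (Ici 0) :=
  fun _ hr => (hf.hasDerivWithinAt_pFlux hr).continuousWithinAt

lemma deriv_pFlux_eq (hp : p ≠ 1) (hf : IsSol p a f fd gd) {r : ℝ} (hr : 0 ≤ r) :
    gd r = |pFlux p (fd r)| - f r := by
  have hEq : EqOn gd (fun r => |pFlux p (fd r)| - f r) (Ioi 0) := fun r hr => by
    show gd r = |pFlux p (fd r)| - f r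
    rw [abs_pFlux hp]
    linarith [hf.2.2.2.2.1 r hr]
  exact hEq.of_subset_closure hf.2.2.2.1 (hf.continuousOn_pFlux.abs.sub hf.continuousOn)
    Ioi_subset_Ici_self (by rw [closure_Ioi]) hr

/-- At a zero of `φ_p(f')` in `[0, r)` the derivative `-f` is negative, so `φ_p(f')` cannot
cross `0` upwards. -/
lemma pFlux_nonpos (hp : p ≠ 1) (hf : IsSol p a f fd gd) {r : ℝ}
    (hpos : ∀ s ∈ Ico 0 r, 0 < f s) {s : ℝ} (hs : s ∈ Icc 0 r) : pFlux p (fd s) ≤ 0 :=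
  image_le_of_deriv_right_lt_deriv_boundary' (B := fun _ => 0) (B' := fun _ => 0)
    (hf.continuousOn_pFlux.mono Icc_subset_Ici_self)
    (fun x hx => (hf.hasDerivWithinAt_pFlux hx.1).mono (Ici_subset_Ici.2 hx.1))
    (by simp [pFlux, hf.2.2.2.2.2.2]) continuousOn_const
    (fun x _ => hasDerivWithinAt_const x _ 0)
    (fun x hx hx0 => by
      rw [hf.deriv_pFlux_eq hp hx.1, hx0, abs_zero]
      linarith [hpos x hx])
    hs

lemma fd_nonpos (hp : p ≠ 1) (hf : IsSol p a f fd gd) {r : ℝ}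
    (hpos : ∀ s ∈ Ico 0 r, 0 < f s) {s : ℝ} (hs : s ∈ Icc 0 r) : fd s ≤ 0 :=
  pFlux_nonpos_iff.1 (hf.pFlux_nonpos hp hpos hs)

/-- `|f'| = (-φ_p(f'))^{1/(p-1)}` is differentiable even where `f' = 0` because `1/(p-1) ≥ 1`,
and the derivative of `|f'| - f/(p-1)` works out to `f (-φ_p(f'))^{(2-p)/(p-1)} / (p-1) ≥ 0`. -/
lemma monotoneOn_abs_fd_sub (hp : p ∈ Ioo 1 2) (hf : IsSol p a f fd gd) {r : ℝ}
    (hpos : ∀ s ∈ Ico 0 r, 0 < f s) :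
    MonotoneOn (fun t => |fd t| - f t / (p - 1)) (Icc 0 r) := by
  have hp1 : p ≠ 1 := hp.1.ne'
  set q := (p - 1)⁻¹
  have hq : 1 ≤ q := one_le_inv₀ (by linarith [hp.1]) |>.2 (by linarith [hp.2])
  have hcont : ContinuousOn (fun t => |fd t| - f t / (p - 1)) (Icc 0 r) :=
    ((hf.2.1.abs).sub (hf.continuousOn.div_const _)).mono Icc_subset_Ici_self
  have hflux : ∀ t ∈ Ioo 0 r, pFlux p (fd t) ≤ 0 := fun t ht =>
    hf.pFlux_nonpos hp1 hpos (Ioo_subset_Icc_self ht)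
  refine monotoneOn_of_hasDerivWithinAt_nonneg
    (f' := fun x => q * f x * (-pFlux p (fd x)) ^ (q - 1)) (convex_Icc 0 r)
    hcont (fun x hx => ?_) (fun x hx => ?_)
  all_goals rw [interior_Icc] at hx
  · have habs : (fun t => |fd t|) =ᶠ[𝓝 x] fun t => (-pFlux p (fd t)) ^ q :=
      eventually_of_mem (Ioo_mem_nhds hx.1 hx.2) fun t ht => by
        show |fd t| = _
        rw [abs_eq_abs_pFlux_rpow hp1, abs_of_nonpos (hflux t ht)]
    set u := -pFlux p (fd x)
    have hG : HasDerivAt (fun t => |fd t| - f t / (p - 1))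
        (-gd x * q * u ^ (q - 1) - fd x / (p - 1)) x :=
      (((hf.hasDerivAt_pFlux hx.1).neg.rpow_const (Or.inr hq)).congr_of_eventuallyEq
        habs).sub ((hf.hasDerivAt hx.1).div_const (p - 1))
    refine (hG.congr_deriv ?_).hasDerivWithinAt
    have hu : 0 ≤ u := neg_nonneg.2 (hflux x hx)
    have hfd : fd x = -u ^ q := by
      have h1 := abs_of_nonpos (hf.fd_nonpos hp1 hpos (Ioo_subset_Icc_self hx))
      have h2 : |fd x| = u ^ q := by
        rw [abs_eq_abs_pFlux_rpow hp1, abs_of_nonpos (hflux x hx)]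
      linarith
    have hgd : gd x = u - f x := by
      rw [hf.deriv_pFlux_eq hp1 hx.1.le, abs_of_nonpos (hflux x hx)]
    have hpow : u ^ q = u ^ (q - 1) * u := by
      rw [← Real.rpow_add_one' hu (by linarith), sub_add_cancel]
    rw [hfd, hgd, hpow]
    ring
  · exact mul_nonneg (mul_nonneg (by positivity) (hpos x ⟨hx.1.le, hx.2⟩).le)
      (Real.rpow_nonneg (neg_nonneg.2 (hflux x hx)) _)

/-- `e^t (φ_p(f') + ε)` is antitone on `[t₀, ∞)`, its derivative being `e^t (ε - f) ≤ 0`. -/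
lemma pFlux_le_neg_half (hp : p ∈ Ioo 1 2) (hf : IsSol p a f fd gd)
    (hpos : ∀ t, 0 ≤ t → 0 < f t) {ε t₀ : ℝ} (hε : 0 < ε) (ht₀ : 0 ≤ t₀) (hge : ∀ t ≥ t₀, ε ≤ f t)
    {t : ℝ} (ht : t₀ + 1 ≤ t) : pFlux p (fd t) ≤ -(ε / 2) := by
  have hp1 : p ≠ 1 := hp.1.ne'
  have hflux : ∀ t, 0 ≤ t → pFlux p (fd t) ≤ 0 := fun t ht =>
    hf.pFlux_nonpos hp1 (fun s hs => hpos s hs.1) ⟨ht, le_rfl⟩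
  have hanti : AntitoneOn (fun t => Real.exp t * (pFlux p (fd t) + ε)) (Ici t₀) := by
    refine antitoneOn_of_hasDerivWithinAt_nonpos (f' := fun t => Real.exp t * (ε - f t))
      (convex_Ici t₀) ?_ (fun x hx => ?_) (fun x hx => ?_)
    · exact Real.continuous_exp.continuousOn.mul
        ((hf.continuousOn_pFlux.mono (Ici_subset_Ici.2 ht₀)).add continuousOn_const)
    · rw [interior_Ici] at hx
      have hx0 : 0 < x := ht₀.trans_lt hx
      refine (((Real.hasDerivAt_exp x).mul ((hf.hasDerivAt_pFlux hx0).add_const ε)).congr_deriv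
        ?_).hasDerivWithinAt
      rw [hf.deriv_pFlux_eq hp1 hx0.le, abs_of_nonpos (hflux x hx0.le)]
      ring
    · rw [interior_Ici] at hx
      exact mul_nonpos_of_nonneg_of_nonpos (Real.exp_pos x).le (by linarith [hge x hx.le])
  have h1 := hanti (le_refl t₀ : t₀ ∈ Ici t₀) (by simp only [mem_Ici]; linarith) (by linarith)
  have h2 : 2 * Real.exp t₀ ≤ Real.exp t :=
    calc 2 * Real.exp t₀ ≤ Real.exp 1 * Real.exp t₀ := by
          gcongr; linarith [Real.add_one_lt_exp one_ne_zero]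
      _ = Real.exp (t₀ + 1) := by rw [← Real.exp_add, add_comm]
      _ ≤ Real.exp t := Real.exp_le_exp.2 ht
  have h3 : Real.exp t * (pFlux p (fd t) + ε) ≤ Real.exp t * (ε / 2) := by
    nlinarith [hflux t₀ ht₀, Real.exp_pos t₀]
  linarith [le_of_mul_le_mul_left h3 (Real.exp_pos t)]

/-- Once `φ_p(f') ≤ -ε/2`, the slope `f' ≤ -(ε/2)^{1/(p-1)}` drives `f` below `0`. -/
lemma exists_ge_lt (hp : p ∈ Ioo 1 2) (hf : IsSol p a f fd gd) (hpos : ∀ t, 0 ≤ t → 0 < f t)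
    {ε : ℝ} (hε : 0 < ε) {t₀ : ℝ} (ht₀ : 0 ≤ t₀) : ∃ t ≥ t₀, f t < ε := by
  by_contra! hge
  have hp1 : p ≠ 1 := hp.1.ne'
  have hfd_le : ∀ t > t₀ + 1, fd t ≤ -(ε / 2) ^ (p - 1)⁻¹ := by
    intro t ht
    have hflux := hf.pFlux_le_neg_half hp hpos hε ht₀ hge ht.le
    have h1 : (ε / 2) ^ (p - 1)⁻¹ ≤ |fd t| := by
      rw [abs_eq_abs_pFlux_rpow hp1]
      exact Real.rpow_le_rpow (by positivity)
        (by rw [abs_of_nonpos (by linarith)]; linarith) (inv_nonneg.2 (by linarith [hp.1]))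
    have h2 := hf.fd_nonpos hp1 (fun s hs => hpos s hs.1) ⟨(by linarith : (0 : ℝ) ≤ t), le_rfl⟩
    linarith [abs_of_nonpos h2]
  obtain ⟨t, ht, hft⟩ := exists_nonpos_of_hasDerivAt_le (by positivity)
    (hf.continuousOn.mono (Ici_subset_Ici.2 (by linarith)))
    (fun x hx => hf.hasDerivAt (by linarith)) hfd_le
  linarith [hge t (by linarith)]

lemma exists_eq_of_lt_extTime (hp : p ∈ Ioo 1 2) (ha : 0 < a) (hf : IsSol p a f fd gd)
    {r₀ b : ℝ} (hr₀ : 0 ≤ r₀) (hr₀R : (r₀ : EReal) < extTime f) (hb : b ∈ Ioc 0 (f r₀)) :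
    ∃ r, r₀ ≤ r ∧ (r : EReal) < extTime f ∧ f r = b := by
  have hf0 : 0 < f 0 := hf.apply_zero ▸ ha
  rcases extTime_eq_top_or hf.continuousOn hf0.ne' with htop | ⟨R, -, hfR, hR⟩
  · have hpos : ∀ t, 0 ≤ t → 0 < f t := fun t ht =>
      pos_of_lt_extTime hf.continuousOn hf0 ht (htop ▸ EReal.coe_lt_top t)
    obtain ⟨T, hT, hfT⟩ := hf.exists_ge_lt hp hpos hb.1 hr₀
    obtain ⟨r, hr, hfr⟩ := intermediate_value_Icc' hT
      (hf.continuousOn.mono fun x hx => hr₀.trans hx.1) ⟨hfT.le, hb.2⟩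
    exact ⟨r, hr.1, htop ▸ EReal.coe_lt_top r, hfr⟩
  · rw [hR, EReal.coe_lt_coe_iff] at hr₀R
    obtain ⟨r, hr, hfr⟩ := intermediate_value_Icc' hr₀R.le
      (hf.continuousOn.mono fun x hx => hr₀.trans hx.1) ⟨hfR ▸ hb.1.le, hb.2⟩
    refine ⟨r, hr.1, hR ▸ EReal.coe_lt_coe_iff.2 (lt_of_le_of_ne hr.2 ?_), hfr⟩
    rintro rfl
    linarith [hb.1]

lemma rpow_le_of_psiRel (hp : p ∈ Ioo 1 2) (ha : 0 < a) (hf : IsSol p a f fd gd) {ψ : ℝ → ℝ}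
    (hrel : PsiRel p a f fd ψ) {r₀ y₀ : ℝ} (hr₀ : 0 ≤ r₀) (hr₀R : (r₀ : EReal) < extTime f)
    (hfr₀ : f r₀ = a * (1 - y₀)) (hG : 0 ≤ |fd r₀| - f r₀ / (p - 1)) {y : ℝ} (hy : y ∈ Ioo y₀ 1) :
    ((|fd r₀| - f r₀ / (p - 1)) / a) ^ p ≤ ψ y := by
  have hfr_pos : 0 < a * (1 - y) := mul_pos ha (sub_pos.2 hy.2)
  obtain ⟨r, hr₀r, hrR, hfr⟩ := hf.exists_eq_of_lt_extTime hp ha hr₀ hr₀R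
    ⟨hfr_pos, by rw [hfr₀]; nlinarith [hy.1]⟩
  have hpos : ∀ s ∈ Ico 0 r, 0 < f s := fun s hs => pos_of_lt_extTime hf.continuousOn
    (hf.apply_zero ▸ ha) hs.1 ((EReal.coe_lt_coe_iff.2 hs.2).trans hrR)
  have hmono := hf.monotoneOn_abs_fd_sub hp hpos ⟨hr₀, hr₀r⟩ ⟨hr₀.trans hr₀r, le_rfl⟩ hr₀r
  have hfr_div : 0 ≤ f r / (p - 1) := div_nonneg (hfr ▸ hfr_pos.le) (by linarith [hp.1])
  rw [hrel.eq_rpow ha (hr₀.trans hr₀r) hrR hfr]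
  exact Real.rpow_le_rpow (div_nonneg hG ha.le)
    (div_le_div_of_nonneg_right (by linarith) ha.le) (by linarith [hp.1])

end IsSol

lemma mul_div_lt_of_rpow_neg_lt {k X a c p : ℝ} (hk : 0 < k) (ha : 0 < a) (hc : 0 < c)
    (hX : 0 ≤ X) (hp : 0 < p) (h : k ^ (-p) < (X / a) ^ p * c ^ (-p)) : a * c / k < X := by
  rw [Real.rpow_neg hk.le, Real.rpow_neg hc.le, ← Real.inv_rpow hk.le, ← div_eq_mul_inv,
    ← Real.div_rpow (div_nonneg hX ha.le) hc.le,
    Real.rpow_lt_rpow_iff (inv_nonneg.2 hk.le) (by positivity) hp, div_div,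
    lt_div_iff₀ (mul_pos ha hc), inv_mul_eq_div] at h
  exact h

lemma tendsto_one_sub_rpow_neg_atTop {p : ℝ} (hp : 0 < p) :
    Tendsto (fun y : ℝ => (1 - y) ^ (-p)) (𝓝[<] 1) atTop := by
  refine (tendsto_rpow_neg_nhdsGT_zero (neg_lt_zero.2 hp)).comp ?_
  have h := ((continuous_const.sub continuous_id).tendsto' (1 : ℝ) 0 (sub_self 1)).mono_left
    (nhdsWithin_le_nhds (s := Iio 1))
  exact tendsto_nhdsWithin_iff.2
    ⟨h, eventually_nhdsWithin_of_forall fun _ hy => sub_pos.2 (mem_Iio.1 hy)⟩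

/-- With `ℓ(a) := lim_{y→1} ψ(y,a)` and `κ := (p-1)^{-p}`, one has
`ℓ(a) > 0` if and only if `sup_{y ∈ [0,1)} ψ(y,a)(1-y)^{-p} > κ` (i.e. some value of
`ψ(y,a)(1-y)^{-p}` exceeds `κ`). -/
theorem stmt9 (p a : ℝ) (hp : p ∈ Set.Ioo (1:ℝ) 2) (ha : 0 < a)
    (f fd gd ψ : ℝ → ℝ) (hf : IsSol p a f fd gd) (hrel : PsiRel p a f fd ψ)
    (ℓ : ℝ) (hl : Tendsto ψ (𝓝[<] (1:ℝ)) (𝓝 ℓ)) :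
    0 < ℓ ↔ ∃ y ∈ Set.Ico (0:ℝ) 1, (p-1) ^ (-p) < ψ y * (1-y) ^ (-p) := by
  have hp0 : 0 < p := by linarith [hp.1]
  constructor
  · intro hℓ
    have hmul := hl.pos_mul_atTop hℓ (tendsto_one_sub_rpow_neg_atTop hp0)
    obtain ⟨y, hκ, hy⟩ :=
      ((hmul.eventually_gt_atTop ((p - 1) ^ (-p))).and (Ioo_mem_nhdsLT one_pos)).exists
    exact ⟨y, Ioo_subset_Ico_self hy, hκ⟩
  · rintro ⟨y₀, ⟨hy₀, hy₀1⟩, hκ⟩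
    obtain ⟨r₀, hr₀, hr₀R, hfr₀⟩ := hf.exists_eq_of_lt_extTime hp ha le_rfl
      (zero_lt_extTime hf.continuousOn (hf.apply_zero ▸ ha.ne')) (b := a * (1 - y₀))
      ⟨by nlinarith, by rw [hf.apply_zero]; nlinarith⟩
    rw [hrel.eq_rpow ha hr₀ hr₀R hfr₀] at hκ
    have hG : f r₀ / (p - 1) < |fd r₀| :=
      hfr₀ ▸ mul_div_lt_of_rpow_neg_lt (by linarith [hp.1]) ha (by linarith) (abs_nonneg _) hp0 hκ
    exact (by positivity : 0 < ((|fd r₀| - f r₀ / (p - 1)) / a) ^ p).trans_le <|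
      ge_of_tendsto hl <| eventually_of_mem (Ioo_mem_nhdsLT hy₀1) fun y hy =>
        hf.rpow_le_of_psiRel hp ha hrel hr₀ hr₀R hfr₀ (by linarith) hy
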